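/- arXiv:1612.06470 — 3 statements merged into one kernel-verified Lean document; each statement's English description precedes it below -/
import Mathlib

section
/- Let n ≥ m be positive integers and let r ≤ m. Let C ∈ ℝ^{n×m} and let W ∈ ℝ^{m×m} be symmetric positive semidefinite with eigenvalue decomposition W = V Σ Vᵀ, where V ∈ ℝ^{m×m} is orthogonal and Σ is diagonal with diagonal entries in descending order; let W_(r) = V_r Σ_r V_rᵀ be the best rank-r approximation of W formed from the top r eigenpairs. Let C = QR be a thin QR decomposition and let R W† Rᵀ = V' Σ' V'ᵀ be an eigenvalue decomposition with V' orthogonal and Σ' diagonal with descending diagonal entries, and set G_opt = (Q V'_r) Σ'_r (Q V'_r)ᵀ (the rank-r Nyström approximation via QR decomposition) and G_nys = C (W_(r))† Cᵀ (the standard rank-r Nyström approximation). Then ‖C W† Cᵀ − G_opt‖_F ≤ ‖C W† Cᵀ − G_nys‖_F. -/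
open Matrix

/-- Frobenius norm of a real matrix. -/
noncomputable def frobNorm {a b : ℕ} (A : Matrix (Fin a) (Fin b) ℝ) : ℝ :=
  Real.sqrt (∑ i, ∑ j, (A i j) ^ 2)

/-- `Wd` is the Moore–Penrose pseudo-inverse of `W` (the four Penrose conditions). -/
def IsMoorePenrose {a : ℕ} (W Wd : Matrix (Fin a) (Fin a) ℝ) : Prop :=
  W * Wd * W = W ∧ Wd * W * Wd = Wd ∧ (W * Wd)ᵀ = W * Wd ∧ (Wd * W)ᵀ = Wd * W

/-! Put `G = Q V'` and `K = V'ᵀ R`. Then `C = G K`, `G` has orthonormal columns, so conjugation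
by `G` preserves the Frobenius norm, and `K W† Kᵀ = S'` is diagonal with nonnegative decreasing
entries (`W†` is positive semidefinite, being the symmetric pseudo-inverse of a positive
semidefinite matrix). After conjugating by `G`, the QR approximation is the top-`r` part of `S'`,
while the standard one is `K W_(r)† Kᵀ`, which has rank at most `r` because
`W_(r)† = W_(r)ᵀ (W_(r)†)ᵀ W_(r)†`. So it suffices to know that truncation is a best rank-`r`
approximation of a nonnegative decreasing diagonal matrix `D`: if `P` is the orthogonal projector
onto the column space of `X`, then `‖D - X Y‖² ≥ ‖(1 - P) D‖² = ∑ (1 - Pᵢᵢ) dᵢ²`, and since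
`0 ≤ Pᵢᵢ ≤ 1` and `∑ Pᵢᵢ = rank P ≤ r`, this is at least the tail `∑_{i ≥ r} dᵢ²`. -/

lemma frobNorm_eq_sqrt_trace {a b : ℕ} (A : Matrix (Fin a) (Fin b) ℝ) :
    frobNorm A = √(trace (Aᵀ * A)) := by
  rw [frobNorm, trace, Finset.sum_comm]
  simp [mul_apply, sq]

lemma trace_transpose_mul_self_nonneg {ι κ : Type*} [Fintype ι] [Fintype κ]
    (A : Matrix ι κ ℝ) : 0 ≤ trace (Aᵀ * A) := by
  simpa using (posSemidef_conjTranspose_mul_self A).trace_nonneg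

lemma mul_mul_mul_transpose_mul_transpose {R l ι κ : Type*} [CommSemiring R] [Fintype ι]
    [Fintype κ] (A : Matrix l ι R) (B : Matrix ι κ R) (M : Matrix κ κ R) :
    A * (B * M * Bᵀ) * Aᵀ = (A * B) * M * (A * B)ᵀ := by
  simp only [transpose_mul, Matrix.mul_assoc]

lemma trace_mul_mul_transpose_self {ι κ : Type*} [Fintype ι] [Fintype κ] [DecidableEq κ]
    {U : Matrix ι κ ℝ} (hU : Uᵀ * U = 1) (M : Matrix κ κ ℝ) :
    trace ((U * M * Uᵀ)ᵀ * (U * M * Uᵀ)) = trace (Mᵀ * M) :=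
  calc trace ((U * M * Uᵀ)ᵀ * (U * M * Uᵀ)) = trace (U * (Mᵀ * M * Uᵀ)) := by
        simp only [transpose_mul, transpose_transpose, Matrix.mul_assoc]
        rw [← Matrix.mul_assoc Uᵀ U, hU, Matrix.one_mul]
  _ = trace (Mᵀ * M) := by rw [trace_mul_comm, Matrix.mul_assoc, hU, Matrix.mul_one]

lemma frobNorm_mul_mul_transpose {a b : ℕ} {U : Matrix (Fin a) (Fin b) ℝ} (hU : Uᵀ * U = 1)
    (M : Matrix (Fin b) (Fin b) ℝ) : frobNorm (U * M * Uᵀ) = frobNorm M := by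
  rw [frobNorm_eq_sqrt_trace, frobNorm_eq_sqrt_trace, trace_mul_mul_transpose_self hU]

lemma frobNorm_mul_mul_transpose_sub {a b : ℕ} {U : Matrix (Fin a) (Fin b) ℝ} (hU : Uᵀ * U = 1)
    (M N : Matrix (Fin b) (Fin b) ℝ) : frobNorm (U * M * Uᵀ - U * N * Uᵀ) = frobNorm (M - N) := by
  rw [← Matrix.sub_mul, ← Matrix.mul_sub, frobNorm_mul_mul_transpose hU]

namespace IsMoorePenrose

variable {a : ℕ} {W X Y : Matrix (Fin a) (Fin a) ℝ}

lemma unique (hX : IsMoorePenrose W X) (hY : IsMoorePenrose W Y) : X = Y := by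
  obtain ⟨hX1, hX2, hX3, hX4⟩ := hX
  obtain ⟨hY1, hY2, hY3, hY4⟩ := hY
  have hXWY : X = X * W * Y :=
    calc X = X * (W * X)ᵀ := by rw [hX3, ← Matrix.mul_assoc, hX2]
    _ = X * (W * Y * (W * X))ᵀ := by rw [← Matrix.mul_assoc, hY1]
    _ = X * (W * X) * (W * Y) := by rw [transpose_mul, hX3, hY3, ← Matrix.mul_assoc]
    _ = X * W * Y := by rw [← Matrix.mul_assoc X W X, hX2, Matrix.mul_assoc]
  have hYXW : Y = X * W * Y :=
    calc Y = (Y * W)ᵀ * Y := by rw [hY4, hY2]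
    _ = (Y * W * (X * W))ᵀ * Y := by rw [Matrix.mul_assoc, ← Matrix.mul_assoc W, hX1]
    _ = X * W * (Y * W * Y) := by rw [transpose_mul, hX4, hY4, Matrix.mul_assoc]
    _ = X * W * Y := by rw [hY2]
  rw [hXWY, ← hYXW]

lemma eq_transpose_mul (h : IsMoorePenrose W X) : X = Wᵀ * (Xᵀ * X) := by
  obtain ⟨-, h2, -, h4⟩ := h
  conv_lhs => rw [← h2, ← h4]
  simp only [transpose_mul, Matrix.mul_assoc]

lemma transpose (hW : Wᵀ = W) (h : IsMoorePenrose W X) : IsMoorePenrose W Xᵀ := by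
  obtain ⟨h1, h2, h3, h4⟩ := h
  refine ⟨?_, ?_, ?_, ?_⟩
  · simpa [transpose_mul, hW, Matrix.mul_assoc] using congrArg Matrix.transpose h1
  · simpa [transpose_mul, hW, Matrix.mul_assoc] using congrArg Matrix.transpose h2
  · simpa [transpose_mul, hW] using h4.symm
  · simpa [transpose_mul, hW] using h3.symm

lemma posSemidef (hW : W.PosSemidef) (h : IsMoorePenrose W X) : X.PosSemidef := by
  have hWt : Wᵀ = W := by simpa [conjTranspose_eq_transpose_of_trivial] using hW.isHermitian.eq
  have hXt : Xᵀ = X := (h.transpose hWt).unique h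
  simpa [conjTranspose_eq_transpose_of_trivial, hXt, h.2.1] using hW.conjTranspose_mul_mul_same X

end IsMoorePenrose

lemma Fin.sum_castLE_eq_sum_ite {M : Type*} [AddCommMonoid M] {m r : ℕ} (hr : r ≤ m)
    (f : Fin m → M) :
    ∑ a : Fin r, f (Fin.castLE hr a) = ∑ k : Fin m, if (k : ℕ) < r then f k else 0 := by
  rw [← Finset.sum_filter]
  refine (Finset.sum_map _ (Fin.castLEEmb hr) f).symm.trans (Finset.sum_congr ?_ fun _ _ => rfl)
  ext k
  simp only [Finset.mem_map, Finset.mem_filter, Finset.mem_univ, true_and]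
  exact Set.ext_iff.1 (Fin.range_castLE hr) k

lemma submatrix_castLE_mul_mul_transpose {m r : ℕ} (hr : r ≤ m) (V : Matrix (Fin m) (Fin m) ℝ)
    {S : Matrix (Fin m) (Fin m) ℝ} (hS : S.IsDiag) :
    V.submatrix id (Fin.castLE hr) * S.submatrix (Fin.castLE hr) (Fin.castLE hr) *
        (V.submatrix id (Fin.castLE hr))ᵀ =
      V * diagonal (fun i : Fin m => if (i : ℕ) < r then S.diag i else 0) * Vᵀ := by
  rw [← (hS.submatrix (Fin.castLE_injective hr)).diagonal_diag]
  ext i j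
  rw [mul_apply, mul_apply]
  simp only [mul_diagonal, transpose_apply, submatrix_apply, id, diag_apply]
  rw [Fin.sum_castLE_eq_sum_ite hr (fun k => V i k * S k k * V j k)]
  refine Finset.sum_congr rfl fun k _ => ?_
  split_ifs <;> simp

lemma Matrix.IsDiag.sub_diagonal_ite {m r : ℕ} {S : Matrix (Fin m) (Fin m) ℝ} (hS : S.IsDiag) :
    S - diagonal (fun i : Fin m => if (i : ℕ) < r then S.diag i else 0) =
      diagonal fun i : Fin m => if (i : ℕ) < r then 0 else S.diag i := by
  ext i j
  rcases eq_or_ne i j with rfl | h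
  · by_cases hi : (i : ℕ) < r <;> simp [hi]
  · simp [diagonal_apply_ne _ h, hS h]

section OrthogonalProjection

variable {ι : Type*} [Fintype ι] {P : Matrix ι ι ℝ}

lemma transpose_mul_self_of_isSymm_of_isIdempotentElem {κ : Type*} (hP : P.IsSymm)
    (hPP : IsIdempotentElem P) (M : Matrix ι κ ℝ) : (P * M)ᵀ * (P * M) = Mᵀ * P * M := by
  rw [transpose_mul, hP.eq, Matrix.mul_assoc, ← Matrix.mul_assoc P, hPP.eq, Matrix.mul_assoc]

lemma trace_transpose_mul_self_one_sub_le [DecidableEq ι] {κ : Type*} [Fintype κ]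
    (hP : P.IsSymm) (hPP : IsIdempotentElem P) (M : Matrix ι κ ℝ) :
    trace (((1 - P) * M)ᵀ * ((1 - P) * M)) ≤ trace (Mᵀ * M) := by
  have hsplit : Mᵀ * M = (P * M)ᵀ * (P * M) + ((1 - P) * M)ᵀ * ((1 - P) * M) := by
    rw [transpose_mul_self_of_isSymm_of_isIdempotentElem hP hPP,
      transpose_mul_self_of_isSymm_of_isIdempotentElem (isSymm_one.sub hP) hPP.one_sub,
      ← Matrix.add_mul, ← Matrix.mul_add, add_sub_cancel, Matrix.mul_one]
  rw [hsplit, trace_add]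
  linarith [trace_transpose_mul_self_nonneg (P * M)]

lemma diag_eq_sum_sq_of_isSymm_of_isIdempotentElem (hP : P.IsSymm) (hPP : IsIdempotentElem P)
    (i : ι) : P i i = ∑ j, P i j ^ 2 := by
  conv_lhs => rw [← hPP.eq]
  simp only [mul_apply, sq]
  refine Finset.sum_congr rfl fun j _ => ?_
  rw [← hP.apply i j]

lemma diag_mem_Icc_of_isSymm_of_isIdempotentElem (hP : P.IsSymm) (hPP : IsIdempotentElem P)
    (i : ι) : 0 ≤ P i i ∧ P i i ≤ 1 := by
  have hsum := diag_eq_sum_sq_of_isSymm_of_isIdempotentElem hP hPP i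
  have hle : P i i ^ 2 ≤ ∑ j, P i j ^ 2 :=
    Finset.single_le_sum (f := fun j => P i j ^ 2) (fun j _ => sq_nonneg _) (Finset.mem_univ i)
  have hnonneg : 0 ≤ P i i := hsum ▸ Finset.sum_nonneg fun j _ => sq_nonneg _
  exact ⟨hnonneg, by nlinarith⟩

lemma sum_one_sub_diag_mul_sq_le_trace [DecidableEq ι] (hP : P.IsSymm)
    (hPP : IsIdempotentElem P) (d : ι → ℝ) {A : Matrix ι ι ℝ} (hPA : P * A = A) :
    ∑ i, (1 - P i i) * d i ^ 2 ≤ trace ((diagonal d - A)ᵀ * (diagonal d - A)) := by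
  have hkill : (1 - P) * (diagonal d - A) = (1 - P) * diagonal d := by
    rw [Matrix.mul_sub, Matrix.sub_mul 1 P A, hPA, Matrix.one_mul, sub_self, sub_zero]
  have := trace_transpose_mul_self_one_sub_le hP hPP (diagonal d - A)
  rw [hkill, transpose_mul_self_of_isSymm_of_isIdempotentElem (isSymm_one.sub hP) hPP.one_sub]
    at this
  convert this using 1
  simp only [diagonal_transpose, trace, diag_apply, mul_diagonal, diagonal_mul, Matrix.sub_apply,
    one_apply_eq]
  refine Finset.sum_congr rfl fun i _ => ?_
  ring

end OrthogonalProjection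

lemma exists_orthonormal_cols_mul_transpose_mul_eq {ι κ : Type*} [Fintype ι] [DecidableEq ι]
    [Fintype κ] (X : Matrix ι κ ℝ) :
    ∃ (k : ℕ) (B : Matrix ι (Fin k) ℝ), k ≤ Fintype.card κ ∧ Bᵀ * B = 1 ∧ B * Bᵀ * X = X := by
  let U := Submodule.span ℝ (Set.range fun j => WithLp.toLp 2 (Xᵀ j))
  let b := stdOrthonormalBasis ℝ U
  refine ⟨Module.finrank ℝ U, Matrix.of fun i l => (b l : EuclideanSpace ℝ ι) i,
    finrank_range_le_card _, ?_, ?_⟩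
  · ext l l'
    have h := orthonormal_iff_ite.mp b.orthonormal l l'
    rw [Submodule.coe_inner, EuclideanSpace.inner_eq_star_dotProduct] at h
    simpa [mul_apply, dotProduct, one_apply, mul_comm] using h
  · ext i j
    have h := congrArg (fun v : U => (v : EuclideanSpace ℝ ι) i)
      (b.sum_repr' ⟨_, Submodule.subset_span ⟨j, rfl⟩⟩)
    simp only [Submodule.coe_inner, EuclideanSpace.inner_eq_star_dotProduct, star_trivial,
      AddSubmonoidClass.coe_finsetSum, SetLike.val_smul, WithLp.ofLp_sum, WithLp.ofLp_smul,
      Finset.sum_apply, Pi.smul_apply, smul_eq_mul, transpose_apply] at h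
    rw [← h, Matrix.mul_assoc]
    simp [mul_apply, dotProduct, mul_comm]

lemma sum_tail_le_sum_one_sub_mul {m r : ℕ} (hr : r ≤ m) {c p : Fin m → ℝ} (hc : Antitone c)
    (hc0 : 0 ≤ c) (hp0 : 0 ≤ p) (hp1 : p ≤ 1) (hps : ∑ i, p i ≤ r) :
    ∑ i : Fin m, (if (i : ℕ) < r then 0 else c i) ≤ ∑ i, (1 - p i) * c i := by
  -- compare with a threshold `t` separating the top `r` values of `c` from the others
  obtain ⟨t, ht0, htop, htail⟩ : ∃ t, 0 ≤ t ∧ (∀ i : Fin m, (i : ℕ) < r → t ≤ c i) ∧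
      ∀ i : Fin m, r ≤ (i : ℕ) → c i ≤ t := by
    rcases hr.lt_or_eq with h | rfl
    · exact ⟨c ⟨r, h⟩, hc0 _, fun i hi => hc (Fin.mk_le_mk.2 hi.le), fun i hi => hc hi⟩
    · exact ⟨0, le_rfl, fun i _ => hc0 i, fun i hi => absurd i.isLt hi.not_gt⟩
  let e : Fin m → ℝ := fun i => if (i : ℕ) < r then 1 else 0
  have hcount : ∑ i, e i = r := by
    simp [e, Finset.sum_boole, Fin.card_filter_val_lt, hr]
  have hterm : ∀ i, (1 - p i) * c i - (if (i : ℕ) < r then 0 else c i)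
      = (e i - p i) * (c i - t) + t * (e i - p i) := by
    intro i
    by_cases h : (i : ℕ) < r <;> simp only [e, h, if_true, if_false] <;> ring
  have hpos : ∀ i, 0 ≤ (e i - p i) * (c i - t) := by
    intro i
    by_cases h : (i : ℕ) < r
    · simp only [e, h, if_true]
      exact mul_nonneg (sub_nonneg.2 (hp1 i)) (sub_nonneg.2 (htop i h))
    · simp only [e, h, if_false, zero_sub, neg_mul_comm, neg_sub]
      exact mul_nonneg (hp0 i) (sub_nonneg.2 (htail i (not_lt.1 h)))
  have hdiff : ∑ i, (1 - p i) * c i - ∑ i : Fin m, (if (i : ℕ) < r then 0 else c i)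
      = ∑ i, (e i - p i) * (c i - t) + t * (r - ∑ i, p i) := by
    rw [← Finset.sum_sub_distrib, Finset.sum_congr rfl fun i _ => hterm i, Finset.sum_add_distrib,
      ← Finset.mul_sum, Finset.sum_sub_distrib, hcount]
  nlinarith [Finset.sum_nonneg fun i (_ : i ∈ Finset.univ) => hpos i,
    mul_nonneg ht0 (sub_nonneg.2 hps)]

lemma frobNorm_diagonal_tail_le_frobNorm_diagonal_sub_mul {m r : ℕ} (hr : r ≤ m)
    {d : Fin m → ℝ} (hd0 : 0 ≤ d) (hd : Antitone d) (X : Matrix (Fin m) (Fin r) ℝ)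
    (Y : Matrix (Fin r) (Fin m) ℝ) :
    frobNorm (diagonal fun i : Fin m => if (i : ℕ) < r then 0 else d i) ≤
      frobNorm (diagonal d - X * Y) := by
  obtain ⟨k, B, hk, hB, hBX⟩ := exists_orthonormal_cols_mul_transpose_mul_eq X
  have hP : (B * Bᵀ).IsSymm := by rw [IsSymm, transpose_mul, transpose_transpose]
  have hPP : IsIdempotentElem (B * Bᵀ) := by
    rw [IsIdempotentElem, Matrix.mul_assoc, ← Matrix.mul_assoc Bᵀ, hB, Matrix.one_mul]
  have htrace : ∑ i, (B * Bᵀ) i i = k := by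
    have h := trace_mul_comm B Bᵀ
    rwa [hB, trace_one, Fintype.card_fin] at h
  have hd2 : Antitone (d ^ 2) := fun i j hij => pow_le_pow_left₀ (hd0 j) (hd hij) 2
  rw [frobNorm_eq_sqrt_trace, frobNorm_eq_sqrt_trace]
  refine Real.sqrt_le_sqrt ?_
  calc trace ((diagonal fun i : Fin m => if (i : ℕ) < r then 0 else d i)ᵀ *
        diagonal fun i : Fin m => if (i : ℕ) < r then 0 else d i)
      = ∑ i : Fin m, if (i : ℕ) < r then 0 else (d ^ 2) i := by
        simp only [diagonal_transpose, diagonal_mul_diagonal, trace_diagonal, Pi.pow_apply]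
        exact Finset.sum_congr rfl fun i _ => by split_ifs <;> ring
    _ ≤ ∑ i, (1 - (B * Bᵀ) i i) * (d ^ 2) i :=
        sum_tail_le_sum_one_sub_mul hr hd2 (fun i => sq_nonneg (d i))
          (fun i => (diag_mem_Icc_of_isSymm_of_isIdempotentElem hP hPP i).1)
          (fun i => (diag_mem_Icc_of_isSymm_of_isIdempotentElem hP hPP i).2)
          (htrace ▸ by simpa using hk)
    _ ≤ trace ((diagonal d - X * Y)ᵀ * (diagonal d - X * Y)) :=
        sum_one_sub_diag_mul_sq_le_trace hP hPP d (by rw [← Matrix.mul_assoc, hBX])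

theorem nystrom_via_QR_beats_standard_nystrom_general
    {n m r : ℕ} (hr : r ≤ m)
    (C : Matrix (Fin n) (Fin m) ℝ) (W Wd : Matrix (Fin m) (Fin m) ℝ)
    (hW : W.PosSemidef) (hWd : IsMoorePenrose W Wd)
    -- top-r truncation of the eigendecomposition of W
    (Vr : Matrix (Fin m) (Fin r) ℝ)
    (Sr : Matrix (Fin r) (Fin r) ℝ)
    -- Moore–Penrose pseudo-inverse of W_(r) = Vr Sr Vrᵀ
    (Wrd : Matrix (Fin m) (Fin m) ℝ) (hWrd : IsMoorePenrose (Vr * Sr * Vrᵀ) Wrd)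
    -- thin QR decomposition of C
    (Q : Matrix (Fin n) (Fin m) ℝ) (R : Matrix (Fin m) (Fin m) ℝ)
    (hQR : C = Q * R) (hQ : Qᵀ * Q = 1)
    -- eigenvalue decomposition of R W† Rᵀ
    (V' S' : Matrix (Fin m) (Fin m) ℝ)
    (hV' : V' * V'ᵀ = 1) (hS'diag : S'.IsDiag)
    (hS'desc : ∀ i j : Fin m, i ≤ j → S' j j ≤ S' i i)
    (hEig : R * Wd * Rᵀ = V' * S' * V'ᵀ)
    -- top-r truncation of that eigendecomposition
    (Vr' : Matrix (Fin m) (Fin r) ℝ)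
    (hVr' : ∀ (i : Fin m) (j : Fin r), Vr' i j = V' i (Fin.castLE hr j))
    (Sr' : Matrix (Fin r) (Fin r) ℝ)
    (hSr' : ∀ i j : Fin r, Sr' i j = S' (Fin.castLE hr i) (Fin.castLE hr j)) :
    frobNorm (C * Wd * Cᵀ - (Q * Vr') * Sr' * (Q * Vr')ᵀ) ≤
      frobNorm (C * Wd * Cᵀ - C * Wrd * Cᵀ) := by
  have hV'o : V'ᵀ * V' = 1 := mul_eq_one_comm.mp hV'
  set G := Q * V'
  set K := V'ᵀ * R
  have hG : Gᵀ * G = 1 := by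
    rw [transpose_mul, Matrix.mul_assoc, ← Matrix.mul_assoc Qᵀ, hQ, Matrix.one_mul, hV'o]
  have hconj (M : Matrix (Fin m) (Fin m) ℝ) : C * M * Cᵀ = G * (K * M * Kᵀ) * Gᵀ := by
    rw [hQR, ← Matrix.one_mul R, ← hV', Matrix.mul_assoc V', ← Matrix.mul_assoc Q,
      mul_mul_mul_transpose_mul_transpose]
  have hS' : K * Wd * Kᵀ = S' := by
    rw [← mul_mul_mul_transpose_mul_transpose, hEig, mul_mul_mul_transpose_mul_transpose, hV'o,
      Matrix.one_mul, transpose_one, Matrix.mul_one]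
  have hS'psd : S'.PosSemidef := by
    simpa [hS', conjTranspose_eq_transpose_of_trivial]
      using (hWd.posSemidef hW).mul_mul_conjTranspose_same K
  have hGopt : (Q * Vr') * Sr' * (Q * Vr')ᵀ =
      G * diagonal (fun i : Fin m => if (i : ℕ) < r then S'.diag i else 0) * Gᵀ := by
    rw [show Vr' = V'.submatrix id (Fin.castLE hr) from Matrix.ext hVr',
      show Sr' = S'.submatrix (Fin.castLE hr) (Fin.castLE hr) from Matrix.ext hSr',
      ← mul_mul_mul_transpose_mul_transpose,
      submatrix_castLE_mul_mul_transpose hr V' hS'diag, mul_mul_mul_transpose_mul_transpose]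
  have hXY : K * Wrd * Kᵀ = (K * Vr) * (Srᵀ * Vrᵀ * (Wrdᵀ * Wrd) * Kᵀ) := by
    conv_lhs => rw [hWrd.eq_transpose_mul]
    simp only [transpose_mul, transpose_transpose, Matrix.mul_assoc]
  calc frobNorm (C * Wd * Cᵀ - (Q * Vr') * Sr' * (Q * Vr')ᵀ)
      = frobNorm (diagonal fun i : Fin m => if (i : ℕ) < r then 0 else S'.diag i) := by
        rw [hconj, hS', hGopt, frobNorm_mul_mul_transpose_sub hG, hS'diag.sub_diagonal_ite]
    _ ≤ frobNorm (diagonal S'.diag - (K * Vr) * (Srᵀ * Vrᵀ * (Wrdᵀ * Wrd) * Kᵀ)) :=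
        frobNorm_diagonal_tail_le_frobNorm_diagonal_sub_mul hr (fun _ => hS'psd.diag_nonneg)
          hS'desc _ _
    _ = frobNorm (C * Wd * Cᵀ - C * Wrd * Cᵀ) := by
        rw [hconj Wd, hconj Wrd, hS', hXY, frobNorm_mul_mul_transpose_sub hG,
          hS'diag.diagonal_diag]

/-- the rank-`r` Nyström approximation via QR decomposition is at least as
close to `C W† Cᵀ` (in Frobenius norm) as the standard rank-`r` Nyström approximation
`C (W_(r))† Cᵀ`. -/
theorem nystrom_via_QR_beats_standard_nystrom
    {n m r : ℕ} (hn : 0 < n) (hm : 0 < m) (hmn : m ≤ n) (hr : r ≤ m)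
    (C : Matrix (Fin n) (Fin m) ℝ) (W Wd : Matrix (Fin m) (Fin m) ℝ)
    (hW : W.PosSemidef) (hWd : IsMoorePenrose W Wd)
    -- eigenvalue decomposition of W
    (V S : Matrix (Fin m) (Fin m) ℝ)
    (hVorth : V * Vᵀ = 1) (hSdiag : S.IsDiag)
    (hSdesc : ∀ i j : Fin m, i ≤ j → S j j ≤ S i i)
    (hWdec : W = V * S * Vᵀ)
    -- top-r truncation of the eigendecomposition of W
    (Vr : Matrix (Fin m) (Fin r) ℝ)
    (hVr : ∀ (i : Fin m) (j : Fin r), Vr i j = V i (Fin.castLE hr j))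
    (Sr : Matrix (Fin r) (Fin r) ℝ)
    (hSr : ∀ i j : Fin r, Sr i j = S (Fin.castLE hr i) (Fin.castLE hr j))
    -- Moore–Penrose pseudo-inverse of W_(r) = Vr Sr Vrᵀ
    (Wrd : Matrix (Fin m) (Fin m) ℝ) (hWrd : IsMoorePenrose (Vr * Sr * Vrᵀ) Wrd)
    -- thin QR decomposition of C
    (Q : Matrix (Fin n) (Fin m) ℝ) (R : Matrix (Fin m) (Fin m) ℝ)
    (hQR : C = Q * R) (hQ : Qᵀ * Q = 1) (hRtri : ∀ i j : Fin m, j < i → R i j = 0)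
    -- eigenvalue decomposition of R W† Rᵀ
    (V' S' : Matrix (Fin m) (Fin m) ℝ)
    (hV' : V' * V'ᵀ = 1) (hS'diag : S'.IsDiag)
    (hS'desc : ∀ i j : Fin m, i ≤ j → S' j j ≤ S' i i)
    (hEig : R * Wd * Rᵀ = V' * S' * V'ᵀ)
    -- top-r truncation of that eigendecomposition
    (Vr' : Matrix (Fin m) (Fin r) ℝ)
    (hVr' : ∀ (i : Fin m) (j : Fin r), Vr' i j = V' i (Fin.castLE hr j))
    (Sr' : Matrix (Fin r) (Fin r) ℝ)
    (hSr' : ∀ i j : Fin r, Sr' i j = S' (Fin.castLE hr i) (Fin.castLE hr j)) :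
    frobNorm (C * Wd * Cᵀ - (Q * Vr') * Sr' * (Q * Vr')ᵀ) ≤
      frobNorm (C * Wd * Cᵀ - C * Wrd * Cᵀ) :=
  nystrom_via_QR_beats_standard_nystrom_general hr C W Wd hW hWd Vr Sr Wrd hWrd Q R hQR hQ V' S' hV'
    hS'diag hS'desc hEig Vr' hVr' Sr' hSr'
end

section
/- Let c > 0 and let κ(x, y) = exp(−‖x − y‖₂² / c) be the Gaussian kernel on ℝ^p. Then κ satisfies the kernel regularity property with constant η = 2/c: for all a, b, a', b' ∈ ℝ^p, (κ(a, b) − κ(a', b'))² ≤ (2/c) (‖a − a'‖₂² + ‖b − b'‖₂²). -/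
/-!
The Gaussian profile `u ↦ exp (-u ^ 2)` is `1`-Lipschitz, since `2 |u| ≤ 1 + u ^ 2 ≤ exp (u ^ 2)`
bounds its derivative. Rescaling by `√c` makes `s ↦ exp (-s ^ 2 / c)` Lipschitz with constant
`1 / √c`, and by the reverse triangle inequality `‖a - b‖` moves by at most
`‖a - a'‖ + ‖b - b'‖`; squaring and `(x + y) ^ 2 ≤ 2 (x ^ 2 + y ^ 2)` give the constant `2 / c`.
-/

open Real

lemma two_mul_abs_le_exp_sq (u : ℝ) : 2 * |u| ≤ exp (u ^ 2) := by
  nlinarith [add_one_le_exp (u ^ 2), sq_nonneg (|u| - 1), sq_abs u]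

lemma hasDerivAt_exp_neg_sq (u : ℝ) :
    HasDerivAt (fun x : ℝ => exp (-x ^ 2)) (-(2 * u) * exp (-u ^ 2)) u := by
  simpa [mul_comm] using (hasDerivAt_pow 2 u).fun_neg.exp

lemma lipschitzWith_one_exp_neg_sq : LipschitzWith 1 (fun x : ℝ => exp (-x ^ 2)) := by
  refine lipschitzWith_of_nnnorm_deriv_le
    (fun u => (hasDerivAt_exp_neg_sq u).differentiableAt) fun u => ?_
  rw [(hasDerivAt_exp_neg_sq u).deriv, ← NNReal.coe_le_coe, coe_nnnorm, NNReal.coe_one,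
    norm_mul, norm_neg, norm_mul, Real.norm_two, Real.norm_eq_abs, Real.norm_of_nonneg
    (exp_pos _).le, exp_neg, ← div_eq_mul_inv, div_le_one (exp_pos _)]
  exact two_mul_abs_le_exp_sq u

lemma sq_exp_neg_sq_div_sub_le {c : ℝ} (hc : 0 < c) (s t : ℝ) :
    (exp (-s ^ 2 / c) - exp (-t ^ 2 / c)) ^ 2 ≤ (s - t) ^ 2 / c := by
  have hsqrt : √c ^ 2 = c := sq_sqrt hc.le
  have hscale (r : ℝ) : -r ^ 2 / c = -(r / √c) ^ 2 := by rw [div_pow, hsqrt, neg_div]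
  have hlip := lipschitzWith_one_exp_neg_sq.dist_le_mul (s / √c) (t / √c)
  rw [NNReal.coe_one, one_mul, dist_eq, dist_eq, ← sub_div, abs_div, abs_of_pos
    (sqrt_pos.mpr hc)] at hlip
  calc (exp (-s ^ 2 / c) - exp (-t ^ 2 / c)) ^ 2
      = |exp (-(s / √c) ^ 2) - exp (-(t / √c) ^ 2)| ^ 2 := by rw [sq_abs, hscale, hscale]
    _ ≤ (|s - t| / √c) ^ 2 := by gcongr
    _ = (s - t) ^ 2 / c := by rw [div_pow, sq_abs, hsqrt]

lemma abs_norm_sub_sub_norm_sub_le {E : Type*} [SeminormedAddCommGroup E] (a b a' b' : E) :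
    |‖a - b‖ - ‖a' - b'‖| ≤ ‖a - a'‖ + ‖b - b'‖ :=
  calc |‖a - b‖ - ‖a' - b'‖| ≤ ‖(a - b) - (a' - b')‖ := abs_norm_sub_norm_le _ _
    _ = ‖(a - a') - (b - b')‖ := by abel_nf
    _ ≤ ‖a - a'‖ + ‖b - b'‖ := norm_sub_le _ _

/-- the Gaussian kernel `κ(x, y) = exp(−‖x − y‖² / c)` on `ℝᵖ` satisfies the
kernel regularity property with constant `η = 2/c`. -/
theorem gaussian_kernel_regularity
    {p : ℕ} (c : ℝ) (hc : 0 < c) (a b a' b' : EuclideanSpace ℝ (Fin p)) :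
    (Real.exp (-‖a - b‖ ^ 2 / c) - Real.exp (-‖a' - b'‖ ^ 2 / c)) ^ 2 ≤
      (2 / c) * (‖a - a'‖ ^ 2 + ‖b - b'‖ ^ 2) := by
  obtain ⟨hlower, hupper⟩ := abs_le.mp (abs_norm_sub_sub_norm_sub_le a b a' b')
  calc (exp (-‖a - b‖ ^ 2 / c) - exp (-‖a' - b'‖ ^ 2 / c)) ^ 2
      ≤ (‖a - b‖ - ‖a' - b'‖) ^ 2 / c := sq_exp_neg_sq_div_sub_le hc _ _
    _ ≤ (‖a - a'‖ + ‖b - b'‖) ^ 2 / c := by gcongr ?_ / _; exact sq_le_sq' hlower hupper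
    _ ≤ 2 * (‖a - a'‖ ^ 2 + ‖b - b'‖ ^ 2) / c := by gcongr; exact add_sq_le
    _ = (2 / c) * (‖a - a'‖ ^ 2 + ‖b - b'‖ ^ 2) := by ring
end

section
/- Let R > 0, c ≥ 0, and let d be a positive integer. Let κ(x, y) = (⟨x, y⟩ + c)^d be the polynomial kernel on ℝ^p. Then for all a, b, a', b' ∈ ℝ^p with ‖a‖₂ ≤ R, ‖b‖₂ ≤ R, ‖a'‖₂ ≤ R, ‖b'‖₂ ≤ R, one has (κ(a, b) − κ(a', b'))² ≤ η (‖a − a'‖₂² + ‖b − b'‖₂²) with η = 2 d² (R² + c)^{2(d−1)} R²; that is, the polynomial kernel satisfies the kernel regularity property on the ball of radius R with this constant η depending only on c, d, and R. -/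
open scoped RealInnerProductSpace

lemma abs_pow_sub_pow_le' {x y M : ℝ} (n : ℕ) (hx : |x| ≤ M) (hy : |y| ≤ M) :
    |x ^ n - y ^ n| ≤ n * M ^ (n - 1) * |x - y| := by
  have hM : 0 ≤ M := le_trans (abs_nonneg x) hx
  rw [← geom_sum₂_mul x y n, abs_mul]
  gcongr
  calc |∑ i ∈ Finset.range n, x ^ i * y ^ (n - 1 - i)|
      ≤ ∑ i ∈ Finset.range n, |x ^ i * y ^ (n - 1 - i)| := Finset.abs_sum_le_sum_abs _ _
    _ ≤ ∑ i ∈ Finset.range n, M ^ (n - 1) := by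
        apply Finset.sum_le_sum
        intro i hi
        rw [abs_mul, abs_pow, abs_pow]
        calc |x| ^ i * |y| ^ (n - 1 - i) ≤ M ^ i * M ^ (n - 1 - i) := by gcongr
          _ = M ^ (i + (n - 1 - i)) := (pow_add _ _ _).symm
          _ = M ^ (n - 1) := by
              congr 1
              have := Finset.mem_range.mp hi
              omega
    _ = n * M ^ (n - 1) := by rw [Finset.sum_const, Finset.card_range, nsmul_eq_mul]

/-- the polynomial kernel `κ(x, y) = (⟨x, y⟩ + c)^d` satisfies the kernel
regularity property on the ball of radius `R` with constant
`η = 2 d² (R² + c)^{2(d−1)} R²`. -/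
theorem polynomial_kernel_regularity
    {p : ℕ} (R c : ℝ) (hR : 0 < R) (hc : 0 ≤ c) (d : ℕ) (hd : 0 < d)
    (a b a' b' : EuclideanSpace ℝ (Fin p))
    (ha : ‖a‖ ≤ R) (hb : ‖b‖ ≤ R) (ha' : ‖a'‖ ≤ R) (hb' : ‖b'‖ ≤ R) :
    ((⟪a, b⟫ + c) ^ d - (⟪a', b'⟫ + c) ^ d) ^ 2 ≤
      2 * (d : ℝ) ^ 2 * (R ^ 2 + c) ^ (2 * (d - 1)) * R ^ 2 *
        (‖a - a'‖ ^ 2 + ‖b - b'‖ ^ 2) := by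
  set u := ⟪a, b⟫ + c
  set v := ⟪a', b'⟫ + c
  have hM : (0:ℝ) ≤ R ^ 2 + c := by positivity
  have hbound : ∀ (x y : EuclideanSpace ℝ (Fin p)), ‖x‖ ≤ R → ‖y‖ ≤ R →
      |⟪x, y⟫ + c| ≤ R ^ 2 + c := by
    intro x y hx hy
    have h1 : |⟪x, y⟫| ≤ R ^ 2 := by
      calc |⟪x, y⟫| ≤ ‖x‖ * ‖y‖ := abs_real_inner_le_norm x y
        _ ≤ R * R := mul_le_mul hx hy (norm_nonneg _) hR.le
        _ = R ^ 2 := (sq R).symm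
    calc |⟪x, y⟫ + c| ≤ |⟪x, y⟫| + |c| := abs_add_le _ _
      _ ≤ R ^ 2 + c := by rw [abs_of_nonneg hc]; linarith
  have h1 : |u ^ d - v ^ d| ≤ d * (R ^ 2 + c) ^ (d - 1) * |u - v| :=
    abs_pow_sub_pow_le' d (hbound a b ha hb) (hbound a' b' ha' hb')
  have huv : u - v = ⟪a - a', b⟫ + ⟪a', b - b'⟫ := by
    simp only [u, v, inner_sub_left, inner_sub_right]
    ring
  have h2 : |u - v| ≤ R * (‖a - a'‖ + ‖b - b'‖) := by
    rw [huv]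
    calc |⟪a - a', b⟫ + ⟪a', b - b'⟫| ≤ |⟪a - a', b⟫| + |⟪a', b - b'⟫| := abs_add_le _ _
      _ ≤ ‖a - a'‖ * ‖b‖ + ‖a'‖ * ‖b - b'‖ := by
          gcongr <;> exact abs_real_inner_le_norm _ _
      _ ≤ ‖a - a'‖ * R + R * ‖b - b'‖ := by gcongr
      _ = R * (‖a - a'‖ + ‖b - b'‖) := by ring
  have h3 : |u ^ d - v ^ d| ≤ d * (R ^ 2 + c) ^ (d - 1) * (R * (‖a - a'‖ + ‖b - b'‖)) := by
    calc |u ^ d - v ^ d| ≤ d * (R ^ 2 + c) ^ (d - 1) * |u - v| := h1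
      _ ≤ d * (R ^ 2 + c) ^ (d - 1) * (R * (‖a - a'‖ + ‖b - b'‖)) := by
          gcongr
  have h4 : (u ^ d - v ^ d) ^ 2 ≤
      (d * (R ^ 2 + c) ^ (d - 1) * (R * (‖a - a'‖ + ‖b - b'‖))) ^ 2 := by
    rw [← sq_abs]
    apply pow_le_pow_left₀ (abs_nonneg _) h3
  have h5 : (‖a - a'‖ + ‖b - b'‖) ^ 2 ≤ 2 * (‖a - a'‖ ^ 2 + ‖b - b'‖ ^ 2) := by
    nlinarith [sq_nonneg (‖a - a'‖ - ‖b - b'‖)]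
  calc (u ^ d - v ^ d) ^ 2
      ≤ (d * (R ^ 2 + c) ^ (d - 1) * (R * (‖a - a'‖ + ‖b - b'‖))) ^ 2 := h4
    _ = (d:ℝ) ^ 2 * ((R ^ 2 + c) ^ (d - 1)) ^ 2 * R ^ 2 * (‖a - a'‖ + ‖b - b'‖) ^ 2 := by ring
    _ ≤ (d:ℝ) ^ 2 * ((R ^ 2 + c) ^ (d - 1)) ^ 2 * R ^ 2 *
        (2 * (‖a - a'‖ ^ 2 + ‖b - b'‖ ^ 2)) := by gcongr
    _ = 2 * (d : ℝ) ^ 2 * (R ^ 2 + c) ^ (2 * (d - 1)) * R ^ 2 *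
        (‖a - a'‖ ^ 2 + ‖b - b'‖ ^ 2) := by
        rw [pow_mul']
        ring
end
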